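/- The Fourier transform F on H ⊗ H satisfies: (1) F((f ⊗ g)·Δ(h)) = F(f ⊗ g)·(1 ⊗ h); (2) F(hf ⊗ g) = (h ⊗ 1)·F(f ⊗ g); (3) F(f ⊗ hg) = (1 ⊗ h₍₂₎)·F(f ⊗ g)·(S(h₍₁₎) ⊗ 1), for all f, g, h ∈ H. -/

import Mathlib

/-!
In Sweedler notation all three identities are direct computations with
`F(f ⊗ g) = f S(g₍₁₎) ⊗ g₍₂₎` and the anti-multiplicativity `S(ab) = S(b) S(a)`. The only one
needing more is (1): expanding its left side gives `f h₍₁₎ S(h₍₂₎) S(g₍₁₎) ⊗ g₍₂₎ h₍₃₎`, and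
coassociativity together with the antipode axiom collapses `h₍₁₎ S(h₍₂₎) ⊗ h₍₃₎` to `1 ⊗ h`.
-/

open TensorProduct

noncomputable section

variable (k H : Type*) [Field k] [Ring H] [HopfAlgebra k H]

/-- The Fourier transform `F(f ⊗ g) = f·S(g₍₁₎) ⊗ g₍₂₎`. -/
def fourierF : H ⊗[k] H →ₗ[k] H ⊗[k] H :=
  (LinearMap.rTensor H (LinearMap.mul' k H))
    ∘ₗ (TensorProduct.assoc k H H H).symm.toLinearMap
    ∘ₗ (LinearMap.lTensor H
        ((LinearMap.rTensor H (HopfAlgebra.antipode (R := k))) ∘ₗ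
          (Coalgebra.comul : H →ₗ[k] H ⊗[k] H)))

/-- For a fixed `a ∈ H ⊗ H`, the linear map `H ⊗ H → H ⊗ H` sending
`x ⊗ y ↦ (1 ⊗ y) · a · (S(x) ⊗ 1)`.  Applied to `Δ(h)` it produces
`(1 ⊗ h₍₂₎) · a · (S(h₍₁₎) ⊗ 1)` (Sweedler notation). -/
def sandwich (a : H ⊗[k] H) : H ⊗[k] H →ₗ[k] H ⊗[k] H :=
  TensorProduct.lift (LinearMap.mk₂ k
    (fun x y => ((1 : H) ⊗ₜ[k] y) * a * ((HopfAlgebra.antipode (R := k) x) ⊗ₜ[k] (1 : H)))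
    (fun x₁ x₂ y => by simp [map_add, TensorProduct.add_tmul, mul_add])
    (fun c x y => by simp [map_smul, ← TensorProduct.smul_tmul', mul_smul_comm])
    (fun x y₁ y₂ => by simp [TensorProduct.tmul_add, add_mul, mul_add])
    (fun c x y => by simp [TensorProduct.tmul_smul, smul_mul_assoc]))

open Coalgebra HopfAlgebra

namespace HopfAlgebra

variable {R A ι : Type*} {κ : ι → Type*} [CommSemiring R] [Semiring A] [HopfAlgebra R A]

lemma sum_mul_antipode_tmul_eq_one_tmul {a : A} (r : Repr R a ι)
    (r₂ : ∀ i, Repr R (r.right i) (κ i)) :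
    ∑ i ∈ r.index, ∑ j ∈ (r₂ i).index,
      (r.left i * antipode R ((r₂ i).left j)) ⊗ₜ[R] (r₂ i).right j = 1 ⊗ₜ[R] a := by
  let Φ : A ⊗[R] (A ⊗[R] A) →ₗ[R] A ⊗[R] A :=
    (LinearMap.mul' R A ∘ₗ (antipode R).lTensor A).rTensor A ∘ₗ
      (TensorProduct.assoc R A A A).symm.toLinearMap
  have hΦ (x y z : A) : Φ (x ⊗ₜ (y ⊗ₜ z)) = (x * antipode R y) ⊗ₜ z := by simp [Φ]
  have := congr(Φ $(sum_tmul_tmul_eq r (fun i => ℛ R (r.left i)) r₂))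
  simp only [map_sum, hΦ] at this
  rw [← this]
  simp_rw [← TensorProduct.sum_tmul, sum_mul_antipode_eq_smul, TensorProduct.smul_tmul,
    ← TensorProduct.tmul_sum, sum_counit_smul]

end HopfAlgebra

variable {k H}

lemma sandwich_tmul (a : H ⊗[k] H) (x y : H) :
    sandwich k H a (x ⊗ₜ y) = ((1 : H) ⊗ₜ y) * a * (antipode k x ⊗ₜ (1 : H)) := by
  simp [sandwich]

lemma fourierF_tmul {ι : Type*} (f : H) {g : H} (r : Repr k g ι) :
    fourierF k H (f ⊗ₜ g) = ∑ i ∈ r.index, (f * antipode k (r.left i)) ⊗ₜ r.right i := by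
  simp [fourierF, ← r.eq, map_sum, TensorProduct.tmul_sum]

lemma fourierF_tmul_mul (f g h : H) :
    fourierF k H (f ⊗ₜ (h * g)) = sandwich k H (fourierF k H (f ⊗ₜ g)) (comul h) := by
  let rh := ℛ k h
  let rg := ℛ k g
  rw [fourierF_tmul f (rh.mul rg), fourierF_tmul f rg, ← rh.eq, map_sum, Repr.mul_index,
    Finset.sum_product]
  refine Finset.sum_congr rfl fun i _ => ?_
  rw [sandwich_tmul, Finset.mul_sum, Finset.sum_mul]
  refine Finset.sum_congr rfl fun j _ => ?_
  simp [antipode_mul_antidistrib, mul_assoc]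

lemma fourierF_tmul_one_mul (h : H) (a : H ⊗[k] H) :
    fourierF k H ((h ⊗ₜ 1) * a) = (h ⊗ₜ 1) * fourierF k H a := by
  induction a using TensorProduct.induction_on with
  | zero => simp
  | add a b ha hb => simp only [mul_add, map_add, ha, hb]
  | tmul f g =>
    rw [Algebra.TensorProduct.tmul_mul_tmul, one_mul, fourierF_tmul _ (ℛ k g),
      fourierF_tmul _ (ℛ k g), Finset.mul_sum]
    simp [mul_assoc]

lemma fourierF_mul_comul (a : H ⊗[k] H) (h : H) :
    fourierF k H (a * comul h) = fourierF k H a * (1 ⊗ₜ h) := by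
  induction a using TensorProduct.induction_on with
  | zero => simp
  | add a b ha hb => simp only [add_mul, map_add, ha, hb]
  | tmul f g =>
    let rg := ℛ k g
    let rh := ℛ k h
    let rh₂ := fun i => ℛ k (rh.right i)
    calc fourierF k H (f ⊗ₜ g * comul h)
        = ∑ j ∈ rg.index, (f ⊗ₜ rg.right j) *
            (∑ i ∈ rh.index, ∑ m ∈ (rh₂ i).index,
              (rh.left i * antipode k ((rh₂ i).left m)) ⊗ₜ (rh₂ i).right m) *
            (antipode k (rg.left j) ⊗ₜ 1) := by
          rw [← rh.eq, Finset.mul_sum, map_sum]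
          simp_rw [Algebra.TensorProduct.tmul_mul_tmul, fourierF_tmul _ (rg.mul (rh₂ _)),
            Repr.mul_index, Finset.sum_product, Finset.mul_sum, Finset.sum_mul]
          rw [Finset.sum_comm]
          simp [antipode_mul_antidistrib, mul_assoc]
      _ = fourierF k H (f ⊗ₜ g) * (1 ⊗ₜ h) := by
          simp_rw [sum_mul_antipode_tmul_eq_one_tmul, fourierF_tmul f rg, Finset.sum_mul,
            Algebra.TensorProduct.tmul_mul_tmul]
          simp

variable (k H)

theorem fourier_properties :
    (∀ f g h : H,
        fourierF k H ((f ⊗ₜ[k] g) * (Coalgebra.comul (R := k) h)) =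
          fourierF k H (f ⊗ₜ[k] g) * ((1 : H) ⊗ₜ[k] h)) ∧
    (∀ f g h : H,
        fourierF k H ((h * f) ⊗ₜ[k] g) = (h ⊗ₜ[k] (1 : H)) * fourierF k H (f ⊗ₜ[k] g)) ∧
    (∀ f g h : H,
        fourierF k H (f ⊗ₜ[k] (h * g)) =
          sandwich k H (fourierF k H (f ⊗ₜ[k] g)) (Coalgebra.comul (R := k) h)) := by
  refine ⟨fun f g h => fourierF_mul_comul (f ⊗ₜ g) h, fun f g h => ?_, fourierF_tmul_mul⟩
  rw [← fourierF_tmul_one_mul, Algebra.TensorProduct.tmul_mul_tmul, one_mul]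

end
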